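/- arXiv:2112.01106 — 5 statements merged into one kernel-verified Lean document; each statement's English description precedes it below -/
import Mathlib

section
/- Let b > 1 and n > 1 be integers and let a be a positive integer. The additive submonoid S_a(b,n) of ℕ generated by the sequence a_i = r_b(n) + a·r_b(i-1), i ≥ 1, has finite complement in ℕ (i.e., is a numerical semigroup) if and only if gcd(r_b(n), a) = 1. -/
/-- The repunit number in base `b` of length `ℓ`: `r_b(ℓ) = ∑_{j=0}^{ℓ-1} b^j`. -/
def repunit (b ℓ : ℕ) : ℕ := ∑ j ∈ Finset.range ℓ, b ^ j

/-- The sequence `a_i = r_b(n) + a·r_b(i-1)`. -/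
def aseq (b a n i : ℕ) : ℕ := repunit b n + a * repunit b (i - 1)

/-- The additive submonoid `S_a(b,n)` of `ℕ` generated by `{a_i : i ≥ 1}`. -/
def grep (b a n : ℕ) : AddSubmonoid ℕ :=
  AddSubmonoid.closure {x | ∃ i, 1 ≤ i ∧ x = aseq b a n i}

theorem stmt_0 (b a n : ℕ) (hb : 1 < b) (hn : 1 < n) (ha : 0 < a) :
    ((grep b a n : Set ℕ)ᶜ).Finite ↔ Nat.gcd (repunit b n) a = 1 := by
  set r := repunit b n with hrdef
  have hrpos : 0 < r := by
    have h1 : b ^ 0 ≤ r := by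
      apply Finset.single_le_sum (f := fun j => b ^ j) (fun i _ => Nat.zero_le _)
      exact Finset.mem_range.mpr (by omega)
    simpa using Nat.lt_of_lt_of_le Nat.zero_lt_one (by simpa using h1)
  have hmem_r : r ∈ grep b a n := by
    apply AddSubmonoid.subset_closure
    exact ⟨1, le_refl 1, by simp [aseq, repunit, hrdef]⟩
  have hmem_q : r + a ∈ grep b a n := by
    apply AddSubmonoid.subset_closure
    exact ⟨2, by omega, by simp [aseq, repunit, hrdef]⟩
  constructor
  · intro hfin
    by_contra hg
    set d := Nat.gcd r a with hd
    have hd2 : 2 ≤ d := by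
      have : 0 < d := Nat.gcd_pos_of_pos_left a hrpos
      omega
    have hdvd : ∀ x ∈ grep b a n, d ∣ x := by
      intro x hx
      induction hx using AddSubmonoid.closure_induction with
      | mem x hx =>
          obtain ⟨i, hi, rfl⟩ := hx
          exact Nat.dvd_add (Nat.gcd_dvd_left r a)
            (Dvd.dvd.mul_right (Nat.gcd_dvd_right r a) _)
      | zero => exact dvd_zero d
      | add x y _ _ hx hy => exact Nat.dvd_add hx hy
    have hinf : ((grep b a n : Set ℕ)ᶜ).Infinite := by
      apply Set.infinite_of_injective_forall_mem (f := fun k : ℕ => d * k + 1)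
      · intro x y hxy
        simp only at hxy
        have h : d * x = d * y := by omega
        exact Nat.eq_of_mul_eq_mul_left (by omega) h
      · intro k
        simp only [Set.mem_compl_iff]
        intro hmem
        have := hdvd _ hmem
        obtain ⟨c, hc⟩ := this
        rcases le_or_gt c k with h | h
        · nlinarith
        · nlinarith
    exact hinf hfin
  · intro hg
    set q := r + a with hq
    have hqpos : 0 < q := by omega
    haveI : NeZero q := ⟨by omega⟩
    have hcop : Nat.Coprime r q := by
      have : Nat.Coprime r (a + r) := (Nat.coprime_add_self_right).mpr hg
      simpa [hq, Nat.add_comm] using this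
    apply Set.Finite.subset (Set.finite_Iio (r * q))
    intro N hN
    simp only [Set.mem_compl_iff] at hN
    by_contra hlt
    apply hN
    have hNge : r * q ≤ N := by simpa [Set.mem_Iio] using hlt
    -- find x < q with r * x ≡ N [MOD q]
    set u : (ZMod q)ˣ := ZMod.unitOfCoprime r hcop with hu
    set x : ℕ := (((u⁻¹ : (ZMod q)ˣ) : ZMod q) * (N : ZMod q)).val with hx
    have hxlt : x < q := ZMod.val_lt _
    have hcast : ((r * x : ℕ) : ZMod q) = (N : ZMod q) := by
      push_cast
      rw [hx, ZMod.natCast_val, ZMod.cast_id]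
      have hru : ((r : ZMod q)) = (u : ZMod q) := (ZMod.coe_unitOfCoprime r hcop).symm
      rw [hru, ← mul_assoc]
      simp
    have hmod : (r * x) % q = N % q := by
      have := (ZMod.natCast_eq_natCast_iff _ _ _).mp hcast
      exact this
    have hle : r * x ≤ N := by
      have h1 : r * x < r * q := mul_lt_mul_of_pos_left hxlt hrpos
      omega
    have hdvd : q ∣ N - r * x := (Nat.modEq_iff_dvd' hle).mp hmod
    obtain ⟨y, hy⟩ := hdvd
    have hNeq : N = x * r + y * q := by
      rw [Nat.mul_comm x r, Nat.mul_comm y q]; omega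
    rw [hNeq]
    exact AddSubmonoid.add_mem _
      (by simpa [nsmul_eq_mul] using AddSubmonoid.nsmul_mem _ hmem_r x)
      (by simpa [nsmul_eq_mul] using AddSubmonoid.nsmul_mem _ hmem_q y)
end

section
/- Let b > 1 and n > 1 be integers and a a positive integer with gcd(r_b(n), a) = 1. Then {a_1, a_2, …, a_n} is the minimal system of generators of S_a(b,n): these n numbers generate S_a(b,n) and no proper subset of them generates it. In particular, the embedding dimension of S_a(b,n) is n. -/
lemma repunit_add (b m n : ℕ) : repunit b (m + n) = repunit b m + b ^ m * repunit b n := by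
  simp [repunit, Finset.sum_range_add, pow_add, Finset.mul_sum]

lemma repunit_strictMono (b : ℕ) (hb : 0 < b) : StrictMono (repunit b) := by
  apply strictMono_nat_of_lt_succ
  intro k
  have : 0 < b ^ k := pow_pos hb k
  simp [repunit, Finset.sum_range_succ]
  omega

lemma aseq_one (b a n : ℕ) : aseq b a n 1 = repunit b n := by
  simp [aseq, repunit]

lemma aseq_key (b a n i : ℕ) (hi : 1 ≤ i) :
    aseq b a n (i + n) = aseq b a n i + (a * b ^ (i - 1)) * aseq b a n 1 := by
  obtain ⟨j, rfl⟩ := Nat.exists_eq_add_of_le hi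
  simp only [aseq_one, aseq]
  have : 1 + j + n - 1 = j + n := by omega
  rw [this, Nat.add_sub_cancel_left 1 j, repunit_add]
  simp only [repunit, Finset.range_zero, Finset.sum_empty]
  ring

lemma aseq_mem_closure (b a n : ℕ) (hn : 1 ≤ n) :
    ∀ i, 1 ≤ i → aseq b a n i ∈
      AddSubmonoid.closure (((Finset.Icc 1 n).image (aseq b a n) : Finset ℕ) : Set ℕ) := by
  intro i
  induction i using Nat.strong_induction_on with
  | _ i ih =>
    intro hi
    by_cases h : i ≤ n
    · exact AddSubmonoid.subset_closure (by
        simp only [Finset.coe_image, Set.mem_image, Finset.mem_coe, Finset.mem_Icc]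
        exact ⟨i, ⟨hi, h⟩, rfl⟩)
    · have h1 : 1 ≤ i - n := by omega
      have key : aseq b a n i = aseq b a n (i - n) + (a * b ^ (i - n - 1)) * aseq b a n 1 := by
        have := aseq_key b a n (i - n) h1
        rwa [Nat.sub_add_cancel (by omega)] at this
      have hone : aseq b a n 1 ∈
          AddSubmonoid.closure (((Finset.Icc 1 n).image (aseq b a n) : Finset ℕ) : Set ℕ) :=
        ih 1 (by omega) le_rfl
      rw [key]
      exact add_mem (ih (i - n) (by omega) h1)
        (by simpa [smul_eq_mul] using nsmul_mem hone (a * b ^ (i - n - 1)))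

lemma sum_modEq_card_mul (a r : ℕ) (l : Multiset ℕ) (h : ∀ y ∈ l, y ≡ r [MOD a]) :
    l.sum ≡ Multiset.card l * r [MOD a] := by
  induction l using Multiset.induction with
  | empty => simpa using Nat.ModEq.refl 0
  | cons y s ihs =>
    simp only [Multiset.sum_cons, Multiset.card_cons]
    have hy : y ≡ r [MOD a] := h y (Multiset.mem_cons_self y s)
    have hs : s.sum ≡ Multiset.card s * r [MOD a] :=
      ihs (fun z hz => h z (Multiset.mem_cons_of_mem hz))
    calc y + s.sum ≡ r + Multiset.card s * r [MOD a] := hy.add hs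
      _ = (Multiset.card s + 1) * r := by ring

theorem stmt_2 (b a n : ℕ) (hb : 1 < b) (hn : 1 < n) (ha : 0 < a)
    (hgcd : Nat.gcd (repunit b n) a = 1) :
    AddSubmonoid.closure (((Finset.Icc 1 n).image (aseq b a n) : Finset ℕ) : Set ℕ)
        = grep b a n ∧
    (∀ T ⊆ (Finset.Icc 1 n).image (aseq b a n),
        AddSubmonoid.closure (T : Set ℕ) = grep b a n →
        T = (Finset.Icc 1 n).image (aseq b a n)) ∧
    ((Finset.Icc 1 n).image (aseq b a n)).card = n := by
  have hb0 : 0 < b := by omega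
  have hmono := repunit_strictMono b hb0
  have hrn : 0 < repunit b n := by
    have := hmono (show 0 < n by omega); simpa [repunit] using this
  -- Part 1
  have h1 : AddSubmonoid.closure (((Finset.Icc 1 n).image (aseq b a n) : Finset ℕ) : Set ℕ)
      = grep b a n := by
    apply le_antisymm
    · rw [AddSubmonoid.closure_le]
      intro x hx
      simp only [Finset.coe_image, Set.mem_image, Finset.mem_coe, Finset.mem_Icc] at hx
      obtain ⟨i, ⟨hi1, hi2⟩, rfl⟩ := hx
      exact AddSubmonoid.subset_closure ⟨i, hi1, rfl⟩
    · rw [grep, AddSubmonoid.closure_le]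
      rintro x ⟨i, hi, rfl⟩
      exact aseq_mem_closure b a n (by omega) i hi
  refine ⟨h1, ?_, ?_⟩
  · -- minimality
    intro T hT hTc
    apply Finset.Subset.antisymm hT
    intro x hx
    simp only [Finset.mem_image, Finset.mem_Icc] at hx
    obtain ⟨j, ⟨hj1, hj2⟩, rfl⟩ := hx
    have hxg : aseq b a n j ∈ grep b a n :=
      h1 ▸ aseq_mem_closure b a n (by omega) j hj1
    rw [← hTc] at hxg
    obtain ⟨l, hl, hsum⟩ := AddSubmonoid.exists_multiset_of_mem_closure hxg
    have hge : ∀ y ∈ l, repunit b n ≤ y := by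
      intro y hy
      have := hT (hl y hy)
      simp only [Finset.mem_image, Finset.mem_Icc] at this
      obtain ⟨i, _, rfl⟩ := this
      simp [aseq]
    have hmod : l.sum ≡ Multiset.card l * repunit b n [MOD a] := by
      apply sum_modEq_card_mul
      intro y hy
      have := hT (hl y hy)
      simp only [Finset.mem_image, Finset.mem_Icc] at this
      obtain ⟨i, _, rfl⟩ := this
      simp only [aseq]
      exact ((Nat.modEq_iff_dvd' (by omega)).mpr ⟨repunit b (i-1), by omega⟩).symm
    have hxmod : aseq b a n j ≡ 1 * repunit b n [MOD a] := by
      simp only [aseq, one_mul]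
      exact ((Nat.modEq_iff_dvd' (by omega)).mpr ⟨repunit b (j-1), by omega⟩).symm
    rw [hsum] at hmod
    have h2 : Multiset.card l * repunit b n ≡ 1 * repunit b n [MOD a] := hmod.symm.trans hxmod
    have hk : Multiset.card l ≡ 1 [MOD a] :=
      Nat.ModEq.cancel_right_of_coprime (by rwa [Nat.gcd_comm] at hgcd) h2
    have hkle : Multiset.card l * repunit b n ≤ l.sum := by
      simpa [nsmul_eq_mul] using Multiset.card_nsmul_le_sum hge
    have hxlt : aseq b a n j < (a + 1) * repunit b n := by
      have hr : repunit b (j - 1) < repunit b n := hmono (by omega)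
      have h3 : a * repunit b (j - 1) < a * repunit b n := by
        exact (mul_lt_mul_iff_right₀ ha).mpr hr
      have h4 : (a + 1) * repunit b n = repunit b n + a * repunit b n := by ring
      simp only [aseq]
      omega
    have hk1 : Multiset.card l = 1 := by
      by_contra hne
      rcases Nat.lt_or_ge (Multiset.card l) 2 with h2' | h2'
      · interval_cases h : Multiset.card l
        · rw [Multiset.card_eq_zero] at h
          rw [h] at hsum
          have hpos : 0 < aseq b a n j := by simp only [aseq]; omega
          simp at hsum
          omega
        · exact hne rfl
      · have hdvd : a ∣ Multiset.card l - 1 := (Nat.modEq_iff_dvd' (by omega)).mp hk.symm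
        have hka : a + 1 ≤ Multiset.card l := by
          have := Nat.le_of_dvd (by omega) hdvd
          omega
        have : (a + 1) * repunit b n ≤ l.sum :=
          le_trans (Nat.mul_le_mul_right _ hka) hkle
        omega
    obtain ⟨y, rfl⟩ := Multiset.card_eq_one.mp hk1
    have hy : y = aseq b a n j := by simpa using hsum
    exact hy ▸ hl y (by simp)
  · -- card
    rw [Finset.card_image_of_injOn, Nat.card_Icc]
    · omega
    intro i hi i' hi' he
    simp only [Finset.coe_Icc, Set.mem_Icc] at hi hi'
    simp only [aseq] at he
    have he2 : a * repunit b (i - 1) = a * repunit b (i' - 1) := by omega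
    have := hmono.injective (Nat.eq_of_mul_eq_mul_left ha he2)
    omega
end

section
/- Let b > 1 and n > 1 be integers and a a positive integer with gcd(r_b(n), a) = 1. Then S_a(b,n) is closed under the affine map x ↦ b·x + a − (b^n − 1) on its nonzero elements: for every s ∈ S_a(b,n) with s ≠ 0, the integer b·s + a − (b^n − 1) belongs to S_a(b,n). -/
lemma repunit_succ (b m : ℕ) : repunit b (m + 1) = b * repunit b m + 1 := by
  simp [repunit, Finset.sum_range_succ', pow_succ, Finset.mul_sum, mul_comm]

lemma repunit_geom (b n : ℕ) : (b : ℤ) * repunit b n = repunit b n + (b ^ n - 1) := by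
  have h := geom_sum_mul (b : ℤ) n
  push_cast [repunit]
  linarith

theorem stmt_3 (b a n : ℕ) (hb : 1 < b) (hn : 1 < n) (ha : 0 < a)
    (hgcd : Nat.gcd (repunit b n) a = 1) :
    ∀ s ∈ grep b a n, s ≠ 0 →
      ∃ t ∈ grep b a n, (t : ℤ) = b * s + a - (b ^ n - 1) := by
  intro s hs
  induction hs using AddSubmonoid.closure_induction with
  | mem x hx =>
    intro _
    obtain ⟨i, hi, rfl⟩ := hx
    refine ⟨aseq b a n (i + 1), AddSubmonoid.subset_closure ⟨i + 1, by omega, rfl⟩, ?_⟩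
    obtain ⟨j, rfl⟩ : ∃ j, i = j + 1 := ⟨i - 1, by omega⟩
    have h1 := repunit_geom b n
    have h2 : ((repunit b (j + 1) : ℤ)) = b * repunit b j + 1 := by
      exact_mod_cast congrArg (Nat.cast : ℕ → ℤ) (repunit_succ b j)
    simp only [aseq, Nat.add_sub_cancel]
    push_cast
    linear_combination (a : ℤ) * h2 - h1
  | zero => intro h; exact absurd rfl h
  | add x y hx hy ihx ihy =>
    intro hxy
    rcases Nat.eq_zero_or_pos x with rfl | hxpos
    · simpa using ihy (by simpa using hxy)
    · obtain ⟨t, ht, heq⟩ := ihx (by omega)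
      refine ⟨t + b * y, ?_, ?_⟩
      · have hby : b * y ∈ grep b a n := by
          have h := AddSubmonoid.nsmul_mem (grep b a n) hy b
          simpa [smul_eq_mul] using h
        exact AddSubmonoid.add_mem _ ht hby
      · push_cast
        linarith
end

section
/- Let b > 1 be an integer. For every integer i ≥ 2, the cardinality of the set R(b,i) equals r_b(i) = ∑_{j=0}^{i-1} b^j. -/
/-- The set `R(b,i)` of tuples `(u_2, …, u_i) ∈ ℕ^{i-1}` (a tuple with `m = i-1` entries,
where coordinate `j : Fin m` represents `u_{j+2}`) such that every entry is `≤ b`, and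
whenever an entry equals `b`, all previous entries are `0`. -/
def RFin (b m : ℕ) : Finset (Fin m → ℕ) :=
  (Fintype.piFinset fun _ => Finset.range (b + 1)).filter
    (fun u => ∀ j, u j = b → ∀ k, k < j → u k = 0)

lemma RFin_succ_eq (b m : ℕ) (hb : 0 < b) :
    RFin b (m+1) =
      ((RFin b m ×ˢ Finset.range b).image (fun p => Fin.snoc p.1 p.2)) ∪
        {Fin.snoc (0 : Fin m → ℕ) b} := by
  ext u
  simp only [RFin, Finset.mem_union, Finset.mem_image, Finset.mem_product,
    Finset.mem_filter, Fintype.mem_piFinset, Finset.mem_range, Finset.mem_singleton]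
  constructor
  · rintro ⟨h1, h2⟩
    by_cases hlast : u (Fin.last m) = b
    · right
      have hz : ∀ j : Fin m, u (Fin.castSucc j) = 0 := fun j =>
        h2 _ hlast _ (Fin.castSucc_lt_last j)
      funext j
      refine Fin.lastCases ?_ ?_ j
      · simpa using hlast
      · intro i; simpa using hz i
    · left
      refine ⟨(Fin.init u, u (Fin.last m)), ⟨⟨⟨fun j => ?_, fun j hj k hk => ?_⟩, ?_⟩, ?_⟩⟩
      · exact h1 (Fin.castSucc j)
      · exact h2 (Fin.castSucc j) hj (Fin.castSucc k) (by simpa using hk)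
      · exact lt_of_le_of_ne (Nat.lt_succ_iff.mp (h1 (Fin.last m))) hlast
      · exact Fin.snoc_init_self u
  · rintro (⟨⟨p, x⟩, ⟨⟨⟨hp1, hp2⟩, hx⟩, rfl⟩⟩ | rfl)
    · constructor
      · intro j
        refine Fin.lastCases ?_ ?_ j
        · simpa using Nat.lt_succ_of_lt hx
        · intro i; simpa using hp1 i
      · intro j hj k hk
        rcases Fin.exists_castSucc_eq.mpr (fun h : j = Fin.last m => by
          rw [h, Fin.snoc_last] at hj; omega) with ⟨j', rfl⟩
        rw [Fin.snoc_castSucc] at hj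
        rcases Fin.exists_castSucc_eq.mpr (fun h : k = Fin.last m => by
          rw [h] at hk; exact absurd hk (Fin.castSucc_lt_last j').asymm) with ⟨k', rfl⟩
        rw [Fin.snoc_castSucc]
        exact hp2 j' hj k' (by simpa using hk)
    · constructor
      · intro j
        refine Fin.lastCases ?_ ?_ j
        · simp
        · intro i; simp
      · intro j hj k hk
        have hjl : j = Fin.last m := by
          by_contra h
          rcases Fin.exists_castSucc_eq.mpr h with ⟨j', rfl⟩
          rw [Fin.snoc_castSucc] at hj
          simp at hj; omega
        subst hjl
        rcases Fin.exists_castSucc_eq.mpr (fun h : k = Fin.last m => by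
          rw [h] at hk; exact lt_irrefl _ hk) with ⟨k', rfl⟩
        simp

lemma RFin_card_succ (b m : ℕ) (hb : 0 < b) :
    (RFin b (m+1)).card = b * (RFin b m).card + 1 := by
  rw [RFin_succ_eq b m hb]
  rw [Finset.card_union_of_disjoint, Finset.card_image_of_injOn, Finset.card_product,
    Finset.card_range, Finset.card_singleton, Nat.mul_comm]
  · rintro ⟨p, x⟩ hp ⟨q, y⟩ hq h
    have h1 : p = q := by
      have := congrArg Fin.init h
      simpa [Fin.init_snoc] using this
    have h2 : x = y := by
      have := congrArg (fun u => u (Fin.last m)) h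
      simpa using this
    simp [h1, h2]
  · rw [Finset.disjoint_singleton_right, Finset.mem_image]
    rintro ⟨⟨p, x⟩, ⟨hp, h⟩⟩
    have := congrArg (fun u => u (Fin.last m)) h
    simp at this
    simp [Finset.mem_product] at hp
    omega

theorem stmt_5 (b : ℕ) (hb : 1 < b) :
    ∀ i, 2 ≤ i → (RFin b (i - 1)).card = repunit b i := by
  have key : ∀ m, (RFin b m).card = repunit b (m + 1) := by
    intro m
    induction m with
    | zero =>
      simp [RFin, repunit]
    | succ n ih =>
      rw [RFin_card_succ b n (by omega), ih, repunit, repunit, Finset.mul_sum,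
        Finset.sum_range_succ' (fun j => b ^ j) (n + 1)]
      simp [pow_succ, mul_comm]
  intro i hi
  have : i - 1 + 1 = i := by omega
  rw [key (i - 1), this]
end

section
/- Let b > 1 and n > 1 be integers and a a positive integer with gcd(r_b(n), a) = 1. Then the Apéry set of S_a(b,n) with respect to its multiplicity a_1 = r_b(n) is exactly the set { ∑_{i=2}^n u_i·a_i : (u_2, …, u_n) ∈ R(b,n) }. -/
/-- The Apéry set of `S` with respect to `s`: elements `ω ∈ S` with `ω - s ∉ S`
(i.e. there is no `t ∈ S` with `ω = t + s`). -/
def Apery (S : AddSubmonoid ℕ) (s : ℕ) : Set ℕ :=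
  {ω | ω ∈ S ∧ ¬ ∃ t ∈ S, ω = t + s}

namespace Stmt6

lemma rep_succ (b ℓ : ℕ) : repunit b (ℓ+1) = b * repunit b ℓ + 1 := by
  unfold repunit
  rw [Finset.sum_range_succ' (fun j => b ^ j)]
  simp [Finset.mul_sum, pow_succ, mul_comm]

lemma rep_one (b : ℕ) : repunit b 1 = 1 := by simp [repunit]

lemma rep_zero (b : ℕ) : repunit b 0 = 0 := by simp [repunit]

lemma rep_add (b x y : ℕ) : repunit b (x+y) = repunit b x + b^x * repunit b y := by
  unfold repunit
  rw [Finset.sum_range_add]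
  simp [Finset.mul_sum, pow_add]

lemma aseq_one (b a n : ℕ) : aseq b a n 1 = repunit b n := by
  simp [aseq, rep_zero]

lemma mem_RFin_iff {b m : ℕ} {u : Fin m → ℕ} :
    u ∈ RFin b m ↔ (∀ j, u j ≤ b) ∧ ∀ j, u j = b → ∀ k, k < j → u k = 0 := by
  simp [RFin, Finset.mem_filter, Fintype.mem_piFinset, Finset.mem_range, Nat.lt_succ_iff]

/-- generic weighted-sum lemmas -/
lemma sum_add_w {N : ℕ} (w f g : Fin N → ℕ) :
    ∑ i, (f + g) i * w i = (∑ i, f i * w i) + ∑ i, g i * w i := by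
  rw [← Finset.sum_add_distrib]
  refine Finset.sum_congr rfl fun i _ => ?_
  simp [add_mul]

lemma sum_single_w {N : ℕ} (w : Fin N → ℕ) (i : Fin N) (r : ℕ) :
    ∑ j, (Pi.single i r : Fin N → ℕ) j * w j = r * w i := by
  rw [Finset.sum_eq_single i]
  · simp
  · intro j _ hj; simp [Pi.single_apply, hj]
  · intro h; exact absurd (Finset.mem_univ i) h

/-- T: value of a digit tuple. -/
def Tsum (b N : ℕ) (u : Fin N → ℕ) : ℕ := ∑ j, u j * repunit b (j.val + 1)

lemma Tsum_castSucc (b m : ℕ) (u : Fin (m+1) → ℕ) :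
    Tsum b (m+1) u = Tsum b m (fun j => u j.castSucc) + u (Fin.last m) * repunit b (m+1) := by
  unfold Tsum
  rw [Fin.sum_univ_castSucc]
  simp

lemma RFin_castSucc {b m : ℕ} {u : Fin (m+1) → ℕ} (hu : u ∈ RFin b (m+1)) :
    (fun j => u j.castSucc) ∈ RFin b m := by
  rw [mem_RFin_iff] at hu ⊢
  exact ⟨fun j => hu.1 _, fun j hj k hk => hu.2 _ hj _ (by simpa using hk)⟩

lemma T_bound {b : ℕ} (hb : 1 < b) : ∀ {m : ℕ} {u : Fin m → ℕ}, u ∈ RFin b m →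
    Tsum b m u < repunit b (m+1) := by
  intro m
  induction m with
  | zero => intro u _; simp [Tsum, rep_one]
  | succ m ih =>
    intro u hu
    rw [Tsum_castSucc, rep_succ b (m+1)]
    rcases eq_or_lt_of_le ((mem_RFin_iff.mp hu).1 (Fin.last m)) with h | h
    · have hz : Tsum b m (fun j => u j.castSucc) = 0 := by
        apply Finset.sum_eq_zero
        intro j _
        have := (mem_RFin_iff.mp hu).2 (Fin.last m) h j.castSucc (Fin.castSucc_lt_last j)
        simp [this]
      rw [hz, h]
      simp
    · have h1 := ih (RFin_castSucc hu)
      have h2 : (u (Fin.last m) + 1) * repunit b (m+1) ≤ b * repunit b (m+1) :=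
        Nat.mul_le_mul_right _ h
      calc Tsum b m (fun j => u j.castSucc) + u (Fin.last m) * repunit b (m+1)
          < repunit b (m+1) + u (Fin.last m) * repunit b (m+1) := by
            exact Nat.add_lt_add_right h1 _
        _ = (u (Fin.last m) + 1) * repunit b (m+1) := by ring
        _ ≤ b * repunit b (m+1) := h2
        _ < b * repunit b (m+1) + 1 := Nat.lt_succ_self _

lemma T_last_lt {b m : ℕ} (hb : 1 < b) {u : Fin (m+1) → ℕ} (hu : u ∈ RFin b (m+1))
    {w : ℕ} (h : u (Fin.last m) < w) : Tsum b (m+1) u < w * repunit b (m+1) := by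
  rw [Tsum_castSucc]
  have h1 := T_bound hb (RFin_castSucc hu)
  calc Tsum b m (fun j => u j.castSucc) + u (Fin.last m) * repunit b (m+1)
      < repunit b (m+1) + u (Fin.last m) * repunit b (m+1) := Nat.add_lt_add_right h1 _
    _ = (u (Fin.last m) + 1) * repunit b (m+1) := by ring
    _ ≤ w * repunit b (m+1) := Nat.mul_le_mul_right _ h

lemma T_inj {b : ℕ} (hb : 1 < b) : ∀ {m : ℕ} {u v : Fin m → ℕ}, u ∈ RFin b m →
    v ∈ RFin b m → Tsum b m u = Tsum b m v → u = v := by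
  intro m
  induction m with
  | zero => intro u v _ _ _; funext i; exact i.elim0
  | succ m ih =>
    intro u v hu hv h
    have hlast : u (Fin.last m) = v (Fin.last m) := by
      rcases lt_trichotomy (u (Fin.last m)) (v (Fin.last m)) with hlt | he | hlt
      · exfalso
        have h1 := T_last_lt hb hu hlt
        have h2 : v (Fin.last m) * repunit b (m+1) ≤ Tsum b (m+1) v := by
          rw [Tsum_castSucc]; omega
        omega
      · exact he
      · exfalso
        have h1 := T_last_lt hb hv hlt
        have h2 : u (Fin.last m) * repunit b (m+1) ≤ Tsum b (m+1) u := by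
          rw [Tsum_castSucc]; omega
        omega
    have hinit : (fun j : Fin m => u j.castSucc) = (fun j : Fin m => v j.castSucc) := by
      apply ih (RFin_castSucc hu) (RFin_castSucc hv)
      rw [Tsum_castSucc, Tsum_castSucc, hlast] at h
      omega
    funext i
    induction i using Fin.lastCases with
    | last => exact hlast
    | cast k => exact congrFun hinit k

lemma move_id (b a n j k : ℕ) :
    b * aseq b a n (j+1) + aseq b a n (k+1+1) = aseq b a n (j+1+1) + b * aseq b a n (k+1) := by
  simp only [aseq, Nat.add_sub_cancel]
  rw [rep_succ b j, rep_succ b k]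
  ring

lemma keymu (b j k X Y : ℕ) (hb : 2 ≤ b) (hk1 : 1 ≤ k) (hkj : k ≤ j)
    (hX : X ≤ j+2) (hY : Y ≤ b*k) : X + Y < b*(j+1)+(k+1) := by
  obtain ⟨t, ht⟩ : ∃ t, j+1 = k + t := ⟨j+1-k, by omega⟩
  have ht1 : 1 ≤ t := by omega
  have h1 : b*(j+1) = b*k + b*t := by rw [ht, Nat.mul_add]
  have h2 : 2*t ≤ b*t := Nat.mul_le_mul_right t hb
  linarith

def Wsum (b a n N : ℕ) (C : Fin N → ℕ) : ℕ := ∑ i, C i * aseq b a n (i.val + 1)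
def Vsum (b a n N : ℕ) (u : Fin N → ℕ) : ℕ := ∑ j, u j * aseq b a n (j.val + 2)
def musum (N : ℕ) (C : Fin N → ℕ) : ℕ := ∑ i, C i * (i.val + 1)

lemma Wsum_add (b a n N : ℕ) (f g : Fin N → ℕ) :
    Wsum b a n N (f + g) = Wsum b a n N f + Wsum b a n N g := sum_add_w _ f g

lemma Wsum_single (b a n N : ℕ) (i : Fin N) (r : ℕ) :
    Wsum b a n N (Pi.single i r) = r * aseq b a n (i.val + 1) := sum_single_w _ i r

lemma musum_add (N : ℕ) (f g : Fin N → ℕ) :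
    musum N (f + g) = musum N f + musum N g := sum_add_w _ f g

lemma musum_single (N : ℕ) (i : Fin N) (r : ℕ) :
    musum N (Pi.single i r) = r * (i.val + 1) := sum_single_w _ i r

lemma V_eq (b a m : ℕ) (u : Fin (m+1) → ℕ) :
    Vsum b a (m+2) (m+1) u = (∑ j, u j) * repunit b (m+2) + a * Tsum b (m+1) u := by
  unfold Vsum Tsum
  rw [Finset.sum_mul, Finset.mul_sum, ← Finset.sum_add_distrib]
  refine Finset.sum_congr rfl fun j _ => ?_
  simp only [aseq, show ∀ x : ℕ, x + 2 - 1 = x + 1 from fun x => rfl]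
  ring

lemma reduce (b a m : ℕ) (hb : 1 < b) :
    ∀ N (C : Fin (m+2) → ℕ), musum (m+2) C = N →
      ∃ u ∈ RFin b (m+1), Vsum b a (m+2) (m+1) u ≤ Wsum b a (m+2) (m+2) C ∧
        Vsum b a (m+2) (m+1) u ≡ Wsum b a (m+2) (m+2) C [MOD repunit b (m+2)] := by
  intro N
  induction N using Nat.strong_induction_on with
  | _ N ih =>
  intro C hN
  by_cases h0 : C 0 = 0
  · by_cases hd : (fun j : Fin (m+1) => C j.succ) ∈ RFin b (m+1)
    · have hWV : Wsum b a (m+2) (m+2) C = Vsum b a (m+2) (m+1) (fun j : Fin (m+1) => C j.succ) := by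
        unfold Wsum Vsum
        rw [Fin.sum_univ_succ]
        simp [h0]
      exact ⟨_, hd, le_of_eq hWV.symm, by rw [hWV]⟩
    · -- find a move
      have hex : ∃ J K : Fin (m+2), 1 ≤ K.val ∧ K.val ≤ J.val ∧ J.val ≤ m+1 ∧ b ≤ C J ∧
          1 ≤ C K - (if K = J then b else 0) := by
        by_cases hA : ∀ j : Fin (m+1), C j.succ ≤ b
        · have h2 : ¬ ∀ j : Fin (m+1), C j.succ = b → ∀ k, k < j → C k.succ = 0 :=
            fun h => hd (mem_RFin_iff.mpr ⟨hA, h⟩)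
          push_neg at h2
          obtain ⟨j, hjb, k, hkj, hk0⟩ := h2
          have hkj' : k.val < j.val := hkj
          refine ⟨j.succ, k.succ, by simp, by simp; omega, by have := j.isLt; simp; omega,
            le_of_eq hjb.symm, ?_⟩
          have hne : k.succ ≠ j.succ := by
            intro h; apply absurd (Fin.succ_injective _ h); omega
          simp [hne]
          omega
        · push_neg at hA
          obtain ⟨j, hj⟩ := hA
          refine ⟨j.succ, j.succ, by simp, le_refl _, by have := j.isLt; simp; omega,
            by omega, by simp; omega⟩
      obtain ⟨J, K, hK1, hKJ, hJtop, hJb, hK⟩ := hex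
      set base : Fin (m+2) → ℕ :=
        fun i => C i - (if i = J then b else 0) - (if i = K then 1 else 0) with hbase_def
      have hCeq : C = base + Pi.single J b + Pi.single K 1 := by
        by_cases hKJe : K = J
        · subst hKJe
          rw [if_pos rfl] at hK
          funext i
          simp only [Pi.add_apply, Pi.single_apply, hbase_def]
          by_cases h1 : i = K
          · subst h1; simp; omega
          · simp [h1]
        · rw [if_neg hKJe] at hK
          funext i
          simp only [Pi.add_apply, Pi.single_apply, hbase_def]
          by_cases h1 : i = J
          · subst h1
            have h2 : ¬ i = K := fun h => hKJe h.symm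
            simp [h2]
            omega
          · by_cases h2 : i = K
            · subst h2
              simp [h1]
              omega
            · simp [h1, h2]
      obtain ⟨kk, hkk⟩ : ∃ kk, K.val = kk + 1 := ⟨K.val - 1, by omega⟩
      have hWC : Wsum b a (m+2) (m+2) C =
          Wsum b a (m+2) (m+2) base
            + (aseq b a (m+2) (J.val+1+1) + b * aseq b a (m+2) (kk+1)) := by
        conv_lhs => rw [hCeq]
        rw [Wsum_add, Wsum_add, Wsum_single, Wsum_single, one_mul, hkk, ← move_id]
        have hJ1 : J.val - 1 + 1 = J.val := by omega
        rw [show J.val + 1 = (J.val - 1) + 1 + 1 by omega]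
        ring
      have hmuC : musum (m+2) C = musum (m+2) base + (b * (J.val+1) + (K.val+1)) := by
        conv_lhs => rw [hCeq]
        rw [musum_add, musum_add, musum_single, musum_single]
        ring
      -- progress step, 4 cases
      have haseqtop : J.val = m+1 → aseq b a (m+2) (J.val+1+1) = (a+1) * repunit b (m+2) := by
        intro hJt
        rw [show J.val+1+1 = m+2+1 by omega]
        simp only [aseq, show m+2+1-1 = m+2 from rfl]
        ring
      have hstep : ∃ C' D, musum (m+2) C' < musum (m+2) C ∧
          Wsum b a (m+2) (m+2) C = Wsum b a (m+2) (m+2) C' + D * repunit b (m+2) := by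
        by_cases hJt : J.val = m+1 <;> by_cases hKb : kk = 0
        · -- top, bottom
          refine ⟨base, a + 1 + b, ?_, ?_⟩
          · rw [hmuC]
            exact Nat.lt_add_of_pos_right (by positivity)
          · rw [hWC, haseqtop hJt, hKb]
            have h2 : aseq b a (m+2) (0+1) = repunit b (m+2) := aseq_one b a (m+2)
            rw [h2]; ring
        · -- top, not bottom
          refine ⟨base + Pi.single (⟨kk, by omega⟩ : Fin (m+2)) b, a + 1, ?_, ?_⟩
          · rw [hmuC, musum_add, musum_single]
            simp only [Fin.val_mk]
            have := keymu b (J.val) (K.val) 0 (b * (kk+1)) hb hK1 hKJ (by omega)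
              (by rw [hkk])
            omega
          · rw [hWC, Wsum_add, Wsum_single, haseqtop hJt]
            simp only [Fin.val_mk]
            ring
        · -- not top, bottom
          refine ⟨base + Pi.single (⟨J.val+1, by omega⟩ : Fin (m+2)) 1, b, ?_, ?_⟩
          · rw [hmuC, musum_add, musum_single]
            simp only [Fin.val_mk]
            have := keymu b (J.val) (K.val) (J.val+2) 0 hb hK1 hKJ (by omega) (by omega)
            omega
          · rw [hWC, Wsum_add, Wsum_single, hKb]
            simp only [Fin.val_mk]
            have h2 : aseq b a (m+2) (0+1) = repunit b (m+2) := aseq_one b a (m+2)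
            rw [h2]
            ring
        · -- not top, not bottom
          refine ⟨base + Pi.single (⟨J.val+1, by omega⟩ : Fin (m+2)) 1
              + Pi.single (⟨kk, by omega⟩ : Fin (m+2)) b, 0, ?_, ?_⟩
          · rw [hmuC, musum_add, musum_add, musum_single, musum_single]
            simp only [Fin.val_mk]
            have := keymu b (J.val) (K.val) (J.val+2) (b * (kk+1)) hb hK1 hKJ (by omega)
              (by rw [hkk])
            omega
          · rw [hWC, Wsum_add, Wsum_add, Wsum_single, Wsum_single]
            simp only [Fin.val_mk]
            ring
      obtain ⟨C', D, hmu, hW⟩ := hstep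
      obtain ⟨u, hu, hle, hmod⟩ := ih (musum (m+2) C') (by omega) C' rfl
      refine ⟨u, hu, le_trans hle (by omega), ?_⟩
      have h2 : Wsum b a (m+2) (m+2) C' ≡ Wsum b a (m+2) (m+2) C [MOD repunit b (m+2)] := by
        unfold Nat.ModEq
        rw [hW, Nat.add_mul_mod_self_right]
      exact hmod.trans h2
  · -- clear the coefficient of a₁
    have hCeq : C = Function.update C 0 0 + Pi.single 0 (C 0) := by
      funext i
      by_cases hi : i = (0 : Fin (m+2)) <;>
        simp [Function.update_apply, Pi.single_apply, hi]
    have hmu : musum (m+2) C = musum (m+2) (Function.update C 0 0) + C 0 := by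
      conv_lhs => rw [hCeq]
      rw [musum_add, musum_single]
      simp
    have hW : Wsum b a (m+2) (m+2) C =
        Wsum b a (m+2) (m+2) (Function.update C 0 0) + C 0 * repunit b (m+2) := by
      conv_lhs => rw [hCeq]
      rw [Wsum_add, Wsum_single]
      simp [aseq_one]
    obtain ⟨u, hu, hle, hmod⟩ := ih (musum (m+2) (Function.update C 0 0)) (by omega)
      (Function.update C 0 0) rfl
    refine ⟨u, hu, le_trans hle (by omega), ?_⟩
    have h2 : Wsum b a (m+2) (m+2) (Function.update C 0 0) ≡ Wsum b a (m+2) (m+2) C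
        [MOD repunit b (m+2)] := by
      unfold Nat.ModEq
      rw [hW, Nat.add_mul_mod_self_right]
    exact hmod.trans h2

lemma aseq_shift (b a m t : ℕ) :
    aseq b a (m+2) (t+1+(m+2)) = aseq b a (m+2) (t+1) + a * b^t * repunit b (m+2) := by
  unfold aseq
  rw [show t+1+(m+2)-1 = t+(m+2) by omega, Nat.add_sub_cancel, rep_add b t (m+2)]
  ring

lemma aseq_mem_W (b a m : ℕ) : ∀ i, 1 ≤ i → ∃ C, aseq b a (m+2) i = Wsum b a (m+2) (m+2) C := by
  intro i
  induction i using Nat.strong_induction_on with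
  | _ i ih =>
  intro hi
  by_cases h : i ≤ m+2
  · refine ⟨Pi.single (⟨i-1, by omega⟩ : Fin (m+2)) 1, ?_⟩
    rw [Wsum_single, one_mul]
    congr 1
    simp only [Fin.val_mk]
    omega
  · obtain ⟨t, rfl⟩ : ∃ t, i = t+1+(m+2) := ⟨i - (m+3), by omega⟩
    obtain ⟨C0, hC0⟩ := ih (t+1) (by omega) (by omega)
    refine ⟨C0 + Pi.single 0 (a*b^t), ?_⟩
    rw [Wsum_add, Wsum_single, ← hC0, aseq_shift]
    have : ((0 : Fin (m+2)).val + 1) = 1 := by simp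
    rw [this, aseq_one]

lemma mem_imp_W (b a m : ℕ) {x : ℕ} (hx : x ∈ grep b a (m+2)) :
    ∃ C, x = Wsum b a (m+2) (m+2) C := by
  induction hx using AddSubmonoid.closure_induction with
  | mem x hx => obtain ⟨i, hi, rfl⟩ := hx; exact aseq_mem_W b a m i hi
  | zero => exact ⟨0, by simp [Wsum]⟩
  | add x y _ _ hx hy =>
    obtain ⟨C1, rfl⟩ := hx
    obtain ⟨C2, rfl⟩ := hy
    exact ⟨C1 + C2, (Wsum_add b a (m+2) (m+2) C1 C2).symm⟩

lemma V_mem (b a m : ℕ) (u : Fin (m+1) → ℕ) : Vsum b a (m+2) (m+1) u ∈ grep b a (m+2) := by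
  refine AddSubmonoid.sum_mem _ fun j _ => ?_
  have hg : aseq b a (m+2) (j.val+2) ∈ grep b a (m+2) :=
    AddSubmonoid.subset_closure ⟨j.val+2, by omega, rfl⟩
  simpa [nsmul_eq_mul] using AddSubmonoid.nsmul_mem _ hg (u j)

lemma q_mem (b a m : ℕ) : repunit b (m+2) ∈ grep b a (m+2) := by
  have h : aseq b a (m+2) 1 ∈ grep b a (m+2) :=
    AddSubmonoid.subset_closure ⟨1, le_refl 1, rfl⟩
  rwa [aseq_one] at h

lemma q_pos (b m : ℕ) (hb : 1 < b) : 1 ≤ repunit b (m+2) := by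
  rw [rep_succ]
  omega

lemma main (b a m : ℕ) (hb : 1 < b) (hgcd : Nat.gcd (repunit b (m+2)) a = 1) :
    Apery (grep b a (m+2)) (repunit b (m+2))
      = {ω | ∃ u ∈ RFin b (m+1), ω = Vsum b a (m+2) (m+1) u} := by
  ext ω
  simp only [Apery, Set.mem_setOf_eq]
  constructor
  · rintro ⟨hω, hnap⟩
    obtain ⟨C, rfl⟩ := mem_imp_W b a m hω
    obtain ⟨u, hu, hle, hmod⟩ := reduce b a m hb (musum (m+2) C) C rfl
    rcases eq_or_lt_of_le hle with he | hlt
    · exact ⟨u, hu, he.symm⟩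
    · exfalso
      have hdvd : repunit b (m+2) ∣ Wsum b a (m+2) (m+2) C - Vsum b a (m+2) (m+1) u :=
        (Nat.modEq_iff_dvd' hle).mp hmod
      obtain ⟨t, ht⟩ := hdvd
      have hq := q_pos b m hb
      obtain ⟨s, rfl⟩ : ∃ s, t = s+1 := by
        refine ⟨t - 1, ?_⟩
        rcases Nat.eq_zero_or_pos t with h | h
        · rw [h, mul_zero] at ht; omega
        · omega
      rw [mul_add, mul_one] at ht
      refine hnap ⟨Vsum b a (m+2) (m+1) u + s * repunit b (m+2), ?_, ?_⟩
      · exact AddSubmonoid.add_mem _ (V_mem b a m u)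
          (by simpa [nsmul_eq_mul] using AddSubmonoid.nsmul_mem _ (q_mem b a m) s)
      · have h2 : repunit b (m+2) * s = s * repunit b (m+2) := mul_comm _ _
        omega
  · rintro ⟨u, hu, rfl⟩
    refine ⟨V_mem b a m u, ?_⟩
    rintro ⟨t, htS, hteq⟩
    obtain ⟨C, rfl⟩ := mem_imp_W b a m htS
    obtain ⟨u', hu', hle, hmod⟩ := reduce b a m hb (musum (m+2) C) C rfl
    have hm1 : Vsum b a (m+2) (m+1) u' ≡ Vsum b a (m+2) (m+1) u [MOD repunit b (m+2)] := by
      refine hmod.trans ?_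
      unfold Nat.ModEq
      rw [hteq, Nat.add_mod_right]
    rw [V_eq, V_eq] at hm1
    have hmodcancel : ∀ (σ x : ℕ), (σ * repunit b (m+2) + x) % repunit b (m+2)
        = x % repunit b (m+2) := by
      intro σ x
      rw [mul_comm, Nat.mul_add_mod]
    have hm2 : a * Tsum b (m+1) u' ≡ a * Tsum b (m+1) u [MOD repunit b (m+2)] := by
      unfold Nat.ModEq at hm1 ⊢
      rwa [hmodcancel, hmodcancel] at hm1
    have hm3 : Tsum b (m+1) u' ≡ Tsum b (m+1) u [MOD repunit b (m+2)] :=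
      hm2.cancel_left_of_coprime hgcd
    have hTu' : Tsum b (m+1) u' < repunit b (m+2) := T_bound hb hu'
    have hTu : Tsum b (m+1) u < repunit b (m+2) := T_bound hb hu
    have hTeq : Tsum b (m+1) u' = Tsum b (m+1) u := by
      unfold Nat.ModEq at hm3
      rwa [Nat.mod_eq_of_lt hTu', Nat.mod_eq_of_lt hTu] at hm3
    have huu : u' = u := T_inj hb hu' hu hTeq
    rw [huu] at hle
    have hq := q_pos b m hb
    omega

end Stmt6

theorem stmt_6 (b a n : ℕ) (hb : 1 < b) (hn : 1 < n) (ha : 0 < a)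
    (hgcd : Nat.gcd (repunit b n) a = 1) :
    Apery (grep b a n) (repunit b n)
      = {ω | ∃ u ∈ RFin b (n - 1), ω = ∑ j : Fin (n - 1), u j * aseq b a n (j.val + 2)} := by
  obtain ⟨m, rfl⟩ : ∃ m, n = m + 2 := ⟨n - 2, by omega⟩
  exact (Stmt6.main b a m hb hgcd).trans rfl
end
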